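/- arXiv:1110.4236 — 4 statements merged into one kernel-verified Lean document; each statement's English description precedes it below -/
import Mathlib

section
/- Let G be an affine reductive algebraic group over an algebraically closed field k of characteristic zero, X an affine G-variety, and suppose η: X → S(G), x ↦ H_x, is proper. If x ∈ X is such that Λ_x is symmetric, then H_x is a completely reducible subgroup of G. -/
open scoped MatrixGroups

namespace PaperGIT

variable {k : Type} [Field k]

/-- The zero locus in affine space `k^σ` of a set of polynomials. -/
def zeroLocus {σ : Type} (I : Set (MvPolynomial σ k)) : Set (σ → k) :=
  {x | ∀ f ∈ I, MvPolynomial.eval x f = 0}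

/-- A subset of affine space is Zariski closed if it is the zero locus of a set
of polynomials. -/
def IsZClosed {σ : Type} (S : Set (σ → k)) : Prop :=
  ∃ I : Set (MvPolynomial σ k), S = zeroLocus I

/-- The Zariski closure of a subset of affine space. -/
def zClosure {σ : Type} (S : Set (σ → k)) : Set (σ → k) :=
  ⋂₀ {C | IsZClosed C ∧ S ⊆ C}

/-- A matrix viewed as a point of affine space. -/
def mat2pt {n : ℕ} (A : Matrix (Fin n) (Fin n) k) : Fin n × Fin n → k :=
  fun p => A p.1 p.2

/-- An affine algebraic group over `k`, realized (as is always possible) as a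
Zariski closed subgroup of some `GL n k`. -/
structure AlgGroup (k : Type) [Field k] where
  n : ℕ
  toSubgroup : Subgroup (GL (Fin n) k)
  closed : ∃ I : Set (MvPolynomial (Fin n × Fin n) k),
    ∀ A : GL (Fin n) k, A ∈ toSubgroup ↔
      mat2pt (A : Matrix (Fin n) (Fin n) k) ∈ zeroLocus I

/-- A one-parameter subgroup (cocharacter) of `G`: a group homomorphism
`k^× → G` whose matrix entries are Laurent polynomials in the parameter. -/
structure OnePS (G : AlgGroup k) where
  toFun : kˣ →* GL (Fin G.n) k
  mem : ∀ t : kˣ, toFun t ∈ G.toSubgroup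
  regular : ∃ p : Fin G.n × Fin G.n → MvPolynomial Bool k,
    ∀ (t : kˣ) (ij : Fin G.n × Fin G.n),
      (toFun t : Matrix (Fin G.n) (Fin G.n) k) ij.1 ij.2 =
        MvPolynomial.eval (fun b => if b then (t : k) else ((t⁻¹ : kˣ) : k)) (p ij)

/-- `GLimit lam g h` says that the morphism `t ↦ lam(t) * g * lam(t)⁻¹` of `k^×`
into `G` extends to a morphism `k → G` with value `h` at `t = 0`; i.e. that
`lam⁺g = lim_{t→0} lam(t) g lam(t)⁻¹` exists and equals `h`. -/
def GLimit {G : AlgGroup k} (lam : OnePS G) (g h : GL (Fin G.n) k) : Prop :=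
  h ∈ G.toSubgroup ∧
  ∃ q : Fin G.n × Fin G.n → Polynomial k,
    (∀ (t : kˣ) (ij : Fin G.n × Fin G.n),
      ((lam.toFun t * g * (lam.toFun t)⁻¹ : GL (Fin G.n) k) :
          Matrix (Fin G.n) (Fin G.n) k) ij.1 ij.2 = (q ij).eval (t : k)) ∧
    ∀ ij : Fin G.n × Fin G.n,
      (h : Matrix (Fin G.n) (Fin G.n) k) ij.1 ij.2 = (q ij).eval 0

/-- The R-parabolic subgroup `P(λ) = {g ∈ G : lim_{t→0} λ(t) g λ(t)⁻¹ exists}`. -/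
def Pset {G : AlgGroup k} (lam : OnePS G) : Set (GL (Fin G.n) k) :=
  {g | g ∈ G.toSubgroup ∧ ∃ h, GLimit lam g h}

/-- The R-Levi subgroup `L(λ) = {g ∈ G : lim_{t→0} λ(t) g λ(t)⁻¹ = g}`. -/
def Lset {G : AlgGroup k} (lam : OnePS G) : Set (GL (Fin G.n) k) :=
  {g | g ∈ G.toSubgroup ∧ GLimit lam g g}

/-- `L` is an R-Levi subgroup of the R-parabolic subgroup `P`, i.e. `L = L(μ)`
for some one-parameter subgroup `μ` with `P(μ) = P`. -/
def IsRLeviOf {G : AlgGroup k} (L P : Set (GL (Fin G.n) k)) : Prop :=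
  ∃ mu : OnePS G, Pset mu = P ∧ Lset mu = L

/-- `P` is an R-parabolic subgroup of `G`. -/
def IsRParabolic {G : AlgGroup k} (P : Set (GL (Fin G.n) k)) : Prop :=
  ∃ lam : OnePS G, P = Pset lam

/-- Two one-parameter subgroups are opposite if `P(λ) ∩ P(λ')` is an R-Levi
subgroup of both `P(λ)` and `P(λ')`. -/
def AreOpposite {G : AlgGroup k} (lam lam' : OnePS G) : Prop :=
  IsRLeviOf (Pset lam ∩ Pset lam') (Pset lam) ∧
  IsRLeviOf (Pset lam ∩ Pset lam') (Pset lam')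

/-- A subgroup (given as a subset) `H ⊆ G` is completely reducible in `G` if
every R-parabolic subgroup of `G` containing `H` has an R-Levi subgroup
containing `H`. -/
def CompletelyReducible (G : AlgGroup k) (H : Set (GL (Fin G.n) k)) : Prop :=
  ∀ lam : OnePS G, H ⊆ Pset lam →
    ∃ L : Set (GL (Fin G.n) k), IsRLeviOf L (Pset lam) ∧ H ⊆ L

/-- A subgroup (given as a subset) `H ⊆ G` is irreducible in `G` if it is not
contained in any proper R-parabolic subgroup of `G`. -/
def IrreducibleIn (G : AlgGroup k) (H : Set (GL (Fin G.n) k)) : Prop :=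
  ∀ lam : OnePS G, H ⊆ Pset lam → Pset lam = (G.toSubgroup : Set (GL (Fin G.n) k))

/-- The center `Z(G)` of `G`, as a subset. -/
def centerSet (G : AlgGroup k) : Set (GL (Fin G.n) k) :=
  {g | g ∈ G.toSubgroup ∧ ∀ h ∈ G.toSubgroup, g * h = h * g}

/-- The centralizer `Z_G(H)` of a subset `H` in `G`. -/
def centralizerSet (G : AlgGroup k) (H : Set (GL (Fin G.n) k)) :
    Set (GL (Fin G.n) k) :=
  {g | g ∈ G.toSubgroup ∧ ∀ h ∈ H, g * h = h * g}

/-- A subset of `GL n k` which is Zariski closed in `GL n k` (with the subspace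
topology coming from the space of matrices). -/
def ClosedInGL {n : ℕ} (S : Set (GL (Fin n) k)) : Prop :=
  ∃ I : Set (MvPolynomial (Fin n × Fin n) k),
    S = {A : GL (Fin n) k | mat2pt (A : Matrix (Fin n) (Fin n) k) ∈ zeroLocus I}

/-- Zariski connectedness (preconnectedness) of a subset of `GL n k`. -/
def IsConnSet {n : ℕ} (T : Set (GL (Fin n) k)) : Prop :=
  ∀ V W : Set (GL (Fin n) k), ClosedInGL V → ClosedInGL W →
    T ⊆ V ∪ W → T ∩ V ∩ W = ∅ → T ⊆ V ∨ T ⊆ W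

/-- The connected component of the identity of `G`. -/
def idComponent (G : AlgGroup k) : Set (GL (Fin G.n) k) :=
  ⋃₀ {C | C ⊆ (G.toSubgroup : Set (GL (Fin G.n) k)) ∧
      (1 : GL (Fin G.n) k) ∈ C ∧ IsConnSet C}

/-- A unipotent element of `GL n k`. -/
def IsUnipotentEl {n : ℕ} (A : GL (Fin n) k) : Prop :=
  ((A : Matrix (Fin n) (Fin n) k) - 1) ^ n = 0

/-- `G` is reductive: the unipotent radical of the identity component `G⁰` is
trivial, i.e. every connected normal subgroup of `G⁰` consisting of unipotent
elements is trivial. -/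
def IsReductive (G : AlgGroup k) : Prop :=
  ∀ H : Set (GL (Fin G.n) k),
    H ⊆ idComponent G → (1 : GL (Fin G.n) k) ∈ H →
    (∀ a ∈ H, ∀ b ∈ H, a * b ∈ H) → (∀ a ∈ H, a⁻¹ ∈ H) →
    (∀ g ∈ idComponent G, ∀ h ∈ H, g * h * g⁻¹ ∈ H) →
    IsConnSet H → (∀ h ∈ H, IsUnipotentEl h) →
    H = {1}

/-- A semisimple (diagonalizable) element of `GL n k`. -/
def IsSemisimpleEl {n : ℕ} (A : GL (Fin n) k) : Prop :=
  ∃ P : GL (Fin n) k,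
    ((P * A * P⁻¹ : GL (Fin n) k) : Matrix (Fin n) (Fin n) k).IsDiag

/-- A torus in `G`: a Zariski closed connected commutative subgroup all of
whose elements are semisimple. -/
def IsTorusIn (G : AlgGroup k) (T : Set (GL (Fin G.n) k)) : Prop :=
  T ⊆ (G.toSubgroup : Set (GL (Fin G.n) k)) ∧ (1 : GL (Fin G.n) k) ∈ T ∧
  (∀ a ∈ T, ∀ b ∈ T, a * b ∈ T) ∧ (∀ a ∈ T, a⁻¹ ∈ T) ∧
  ClosedInGL T ∧ IsConnSet T ∧
  (∀ a ∈ T, ∀ b ∈ T, a * b = b * a) ∧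
  (∀ a ∈ T, IsSemisimpleEl a)

/-- A maximal torus of `G`. -/
def IsMaximalTorusIn (G : AlgGroup k) (T : Set (GL (Fin G.n) k)) : Prop :=
  IsTorusIn G T ∧ ∀ T' : Set (GL (Fin G.n) k), IsTorusIn G T' → T ⊆ T' → T' = T

/-- A morphism of affine algebraic groups: a group homomorphism on the points
of `G` whose matrix entries are regular functions on `G`. -/
structure AlgGroupHom (G G' : AlgGroup k) where
  toFun : GL (Fin G.n) k → GL (Fin G'.n) k
  mem : ∀ g ∈ G.toSubgroup, toFun g ∈ G'.toSubgroup
  map_one : toFun 1 = 1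
  map_mul : ∀ g ∈ G.toSubgroup, ∀ h ∈ G.toSubgroup, toFun (g * h) = toFun g * toFun h
  regular : ∃ p : Fin G'.n × Fin G'.n → MvPolynomial ((Fin G.n × Fin G.n) ⊕ Unit) k,
    ∀ g ∈ G.toSubgroup, ∀ ij : Fin G'.n × Fin G'.n,
      (toFun g : Matrix (Fin G'.n) (Fin G'.n) k) ij.1 ij.2 =
        MvPolynomial.eval
          (Sum.elim (mat2pt (g : Matrix (Fin G.n) (Fin G.n) k))
            (fun _ => ((g⁻¹ : GL (Fin G.n) k) : Matrix (Fin G.n) (Fin G.n) k).det))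
          (p ij)

/-- Surjectivity of a morphism of algebraic groups (onto the points of `G'`). -/
def AlgGroupHom.Surj {G G' : AlgGroup k} (f : AlgGroupHom G G') : Prop :=
  ∀ g' ∈ G'.toSubgroup, ∃ g ∈ G.toSubgroup, f.toFun g = g'

/-- An affine `G`-variety: a Zariski closed subset of affine space `k^m`
together with an algebraic (polynomially defined) action of `G`. -/
structure GVariety (G : AlgGroup k) (m : ℕ) where
  carrier : Set (Fin m → k)
  closed : IsZClosed carrier
  act : GL (Fin G.n) k → (Fin m → k) → (Fin m → k)
  act_mem : ∀ g ∈ G.toSubgroup, ∀ x ∈ carrier, act g x ∈ carrier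
  act_one : ∀ x ∈ carrier, act 1 x = x
  act_mul : ∀ g ∈ G.toSubgroup, ∀ h ∈ G.toSubgroup, ∀ x ∈ carrier,
    act (g * h) x = act g (act h x)
  regular : ∃ p : Fin m → MvPolynomial ((Fin G.n × Fin G.n) ⊕ (Unit ⊕ Fin m)) k,
    ∀ g ∈ G.toSubgroup, ∀ x ∈ carrier, ∀ i : Fin m,
      act g x i =
        MvPolynomial.eval
          (Sum.elim (mat2pt (g : Matrix (Fin G.n) (Fin G.n) k))
            (Sum.elim
              (fun _ => ((g⁻¹ : GL (Fin G.n) k) : Matrix (Fin G.n) (Fin G.n) k).det)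
              x))
          (p i)

/-- `XLimit X lam x y` : the `lam`-ray through `x`, `t ↦ lam(t)·x`, extends to
a morphism `k → X` with value `y` at `0`; i.e. `lam⁺x` exists and equals `y`. -/
def XLimit {G : AlgGroup k} {m : ℕ} (X : GVariety G m) (lam : OnePS G)
    (x y : Fin m → k) : Prop :=
  y ∈ X.carrier ∧
  ∃ q : Fin m → Polynomial k,
    (∀ (t : kˣ) (i : Fin m), X.act (lam.toFun t) x i = (q i).eval (t : k)) ∧
    ∀ i : Fin m, y i = (q i).eval 0

/-- `lam ∈ Λ_x` : the limit `lam⁺x` exists. -/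
def InLambda {G : AlgGroup k} {m : ℕ} (X : GVariety G m) (x : Fin m → k)
    (lam : OnePS G) : Prop :=
  ∃ y, XLimit X lam x y

/-- `H_x = ∩_{λ ∈ Λ_x} P(λ)`. -/
def Hx {G : AlgGroup k} {m : ℕ} (X : GVariety G m) (x : Fin m → k) :
    Set (GL (Fin G.n) k) :=
  {g | g ∈ G.toSubgroup ∧ ∀ lam : OnePS G, InLambda X x lam → g ∈ Pset lam}

/-- `Λ_x` is symmetric: every `λ ∈ Λ_x` admits an opposite `λ' ∈ Λ_x`. -/
def SymmetricLambda {G : AlgGroup k} {m : ℕ} (X : GVariety G m)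
    (x : Fin m → k) : Prop :=
  ∀ lam : OnePS G, InLambda X x lam →
    ∃ lam' : OnePS G, InLambda X x lam' ∧ AreOpposite lam lam'

/-- The map `η : X → S(G)`, `x ↦ H_x`, is proper: `H_x ⊆ P(λ)` implies `λ ∈ Λ_x`. -/
def EtaProper {G : AlgGroup k} {m : ℕ} (X : GVariety G m) : Prop :=
  ∀ x ∈ X.carrier, ∀ lam : OnePS G, Hx X x ⊆ Pset lam → InLambda X x lam

/-- The `G`-orbit of `x`. -/
def orbitSet {G : AlgGroup k} {m : ℕ} (X : GVariety G m) (x : Fin m → k) :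
    Set (Fin m → k) :=
  {y | ∃ g ∈ G.toSubgroup, y = X.act g x}

/-- `x` is polystable: its `G`-orbit is Zariski closed. -/
def Polystable {G : AlgGroup k} {m : ℕ} (X : GVariety G m) (x : Fin m → k) : Prop :=
  IsZClosed (orbitSet X x)

/-- The stabilizer `G_x` of `x`, as a subset of `G`. -/
def stabSet {G : AlgGroup k} {m : ℕ} (X : GVariety G m) (x : Fin m → k) :
    Set (GL (Fin G.n) k) :=
  {g | g ∈ G.toSubgroup ∧ X.act g x = x}

/-- The center of the action, `G_X = ∩_{x ∈ X} G_x`. -/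
def actionCenter {G : AlgGroup k} {m : ℕ} (X : GVariety G m) :
    Set (GL (Fin G.n) k) :=
  {g | g ∈ G.toSubgroup ∧ ∀ x ∈ X.carrier, X.act g x = x}

/-- `x` is stable: polystable and `G_x/G_X` is finite (finitely many cosets
`g·G_X` with `g ∈ G_x`). -/
def Stable {G : AlgGroup k} {m : ℕ} (X : GVariety G m) (x : Fin m → k) : Prop :=
  Polystable X x ∧
  Set.Finite ((fun g => (fun h => g * h) '' actionCenter X) '' stabSet X x)

/-- `x` is properly stable: polystable with finite stabilizer. -/
def ProperlyStable {G : AlgGroup k} {m : ℕ} (X : GVariety G m) (x : Fin m → k) : Prop :=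
  Polystable X x ∧ (stabSet X x).Finite

/-- `x` is equicentral: polystable and `G_x = G_X`. -/
def Equicentral {G : AlgGroup k} {m : ℕ} (X : GVariety G m) (x : Fin m → k) : Prop :=
  Polystable X x ∧ stabSet X x = actionCenter X

/-- `x` is 1PS stable: polystable, and for every one-parameter subgroup `λ`
of `G` with `λ(k^×) ⊄ G_X` the limit `λ⁺x` does not exist. -/
def OnePSStable {G : AlgGroup k} {m : ℕ} (X : GVariety G m) (x : Fin m → k) : Prop :=
  Polystable X x ∧
  ∀ lam : OnePS G, ¬ (∀ t : kˣ, lam.toFun t ∈ actionCenter X) → ¬ InLambda X x lam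

/-- The weight space of weight `n ∈ ℤ` for the 1PS `lam` acting on `k^m`. -/
def weightSpace {G : AlgGroup k} {m : ℕ} (X : GVariety G m) (lam : OnePS G)
    (n : ℤ) : Set (Fin m → k) :=
  {w | ∀ t : kˣ, X.act (lam.toFun t) w = (((t ^ n : kˣ) : k)) • w}

/-- `μ(v, lam) = μ0`: decomposing `v` into nonzero weight vectors for `lam`,
the minimal occurring weight equals `μ0`. -/
def MuIs {G : AlgGroup k} {m : ℕ} (X : GVariety G m) (lam : OnePS G)
    (v : Fin m → k) (μ0 : ℤ) : Prop :=
  ∃ (s : Finset ℤ) (c : ℤ → (Fin m → k)),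
    (∀ n ∈ s, c n ∈ weightSpace X lam n ∧ c n ≠ 0) ∧
    v = ∑ n ∈ s, c n ∧ μ0 ∈ s ∧ ∀ n ∈ s, μ0 ≤ n

/-- `GL n k` itself, as an affine algebraic group. -/
def fullGL (k : Type) [Field k] (n : ℕ) : AlgGroup k where
  n := n
  toSubgroup := ⊤
  closed := ⟨∅, by intro A; simp [zeroLocus]⟩

/-- A subset `X ⊆ G^N` which is Zariski closed in `G^N`. -/
def GNClosed (G : AlgGroup k) (N : ℕ)
    (S : Set (Fin N → GL (Fin G.n) k)) : Prop :=
  ∃ I : Set (MvPolynomial (Fin N × (Fin G.n × Fin G.n)) k),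
    S = {x | (∀ i, x i ∈ G.toSubgroup) ∧
          ∀ f ∈ I, MvPolynomial.eval
            (fun p => ((x p.1 : Matrix (Fin G.n) (Fin G.n) k) p.2.1 p.2.2)) f = 0}

/-- Limits of the `lam`-ray through `x ∈ X ⊆ G^N`, for the simultaneous
conjugation action. -/
def GNLimit {G : AlgGroup k} {N : ℕ} (X : Set (Fin N → GL (Fin G.n) k))
    (lam : OnePS G) (x y : Fin N → GL (Fin G.n) k) : Prop :=
  y ∈ X ∧
  ∃ q : Fin N → Fin G.n × Fin G.n → Polynomial k,
    (∀ (t : kˣ) (i : Fin N) (ij : Fin G.n × Fin G.n),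
      ((lam.toFun t * x i * (lam.toFun t)⁻¹ : GL (Fin G.n) k) :
          Matrix (Fin G.n) (Fin G.n) k) ij.1 ij.2 = (q i ij).eval (t : k)) ∧
    ∀ (i : Fin N) (ij : Fin G.n × Fin G.n),
      (y i : Matrix (Fin G.n) (Fin G.n) k) ij.1 ij.2 = (q i ij).eval 0

/-- `lam ∈ Λ_x` for `x ∈ X ⊆ G^N`. -/
def GNInLambda {G : AlgGroup k} {N : ℕ} (X : Set (Fin N → GL (Fin G.n) k))
    (x : Fin N → GL (Fin G.n) k) (lam : OnePS G) : Prop :=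
  ∃ y, GNLimit X lam x y

/-- `H_x` for `x ∈ X ⊆ G^N`. -/
def GNHx {G : AlgGroup k} {N : ℕ} (X : Set (Fin N → GL (Fin G.n) k))
    (x : Fin N → GL (Fin G.n) k) : Set (GL (Fin G.n) k) :=
  {g | g ∈ G.toSubgroup ∧ ∀ lam : OnePS G, GNInLambda X x lam → g ∈ Pset lam}

/-- `φ_x`: the subgroup of `G` generated by the components of `x ∈ G^N`. -/
def phiSet {G : AlgGroup k} {N : ℕ} (x : Fin N → GL (Fin G.n) k) :
    Set (GL (Fin G.n) k) :=
  (Subgroup.closure (Set.range x) : Subgroup (GL (Fin G.n) k))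

/-- The orbit of `x ∈ G^N` under simultaneous conjugation. -/
def GNOrbit {G : AlgGroup k} {N : ℕ} (x : Fin N → GL (Fin G.n) k) :
    Set (Fin N → GL (Fin G.n) k) :=
  {y | ∃ g ∈ G.toSubgroup, y = fun i => g * x i * g⁻¹}

/-- Polystability of `x ∈ X ⊆ G^N`: the conjugation orbit is Zariski closed. -/
def GNPolystable (G : AlgGroup k) {N : ℕ} (x : Fin N → GL (Fin G.n) k) : Prop :=
  GNClosed G N (GNOrbit x)

/-- The stabilizer of `x ∈ G^N` under simultaneous conjugation. -/
def GNStab (G : AlgGroup k) {N : ℕ} (x : Fin N → GL (Fin G.n) k) :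
    Set (GL (Fin G.n) k) :=
  {g | g ∈ G.toSubgroup ∧ ∀ i, g * x i * g⁻¹ = x i}

/-- `G_X` for `X ⊆ G^N` with the simultaneous conjugation action. -/
def GNActionCenter (G : AlgGroup k) {N : ℕ}
    (X : Set (Fin N → GL (Fin G.n) k)) : Set (GL (Fin G.n) k) :=
  {g | g ∈ G.toSubgroup ∧ ∀ x ∈ X, ∀ i, g * x i * g⁻¹ = x i}

/-- `x ∈ X ⊆ G^N` is stable: polystable and `G_x/G_X` finite. -/
def GNStable (G : AlgGroup k) {N : ℕ} (X : Set (Fin N → GL (Fin G.n) k))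
    (x : Fin N → GL (Fin G.n) k) : Prop :=
  GNPolystable G x ∧
  Set.Finite ((fun g => (fun h => g * h) '' GNActionCenter G X) '' GNStab G x)

/-- `x ∈ X ⊆ G^N` is equicentral: polystable and `G_x = G_X`. -/
def GNEquicentral (G : AlgGroup k) {N : ℕ} (X : Set (Fin N → GL (Fin G.n) k))
    (x : Fin N → GL (Fin G.n) k) : Prop :=
  GNPolystable G x ∧ GNStab G x = GNActionCenter G X

/-- A subgroup `H ⊆ G` is isotropic: completely reducible with `Z_G(H) = Z(G)`. -/
def IsIsotropic (G : AlgGroup k) (H : Set (GL (Fin G.n) k)) : Prop :=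
  CompletelyReducible G H ∧ centralizerSet G H = centerSet G

/-- Proposition 4.14 of the paper. Suppose
`η : X → S(G)`, `x ↦ H_x`, is proper. If `Λ_x` is symmetric, then `H_x` is a
completely reducible subgroup of `G`. -/
theorem Hx_completelyReducible_of_symmetric
    {k : Type} [Field k] [IsAlgClosed k] [CharZero k]
    (G : AlgGroup k) (hG : IsReductive G)
    {m : ℕ} (X : GVariety G m) (hEta : EtaProper X)
    (x : Fin m → k) (hx : x ∈ X.carrier)
    (hsym : SymmetricLambda X x) :
    CompletelyReducible G (Hx X x) := by
  intro lam hsub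
  have hlam : InLambda X x lam := hEta x hx lam hsub
  obtain ⟨lam', hlam', hopp, _⟩ := hsym lam hlam
  refine ⟨Pset lam ∩ Pset lam', hopp, ?_⟩
  intro g hg
  exact ⟨hsub hg, hg.2 lam' hlam'⟩

end PaperGIT
end

section
/- Let G be an affine reductive algebraic group over an algebraically closed field k of characteristic zero and X an affine G-variety. Suppose there exists a map ψ: X → G such that for every x ∈ X and every one-parameter subgroup λ of G, the limit λ^+(ψ(x)) = lim_{t→0} λ(t)ψ(x)λ(t)^{-1} exists if and only if λ^+x exists. Then the map η: X → S(G), x ↦ H_x, is proper. -/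
open scoped MatrixGroups

namespace PaperGIT

variable {k : Type} [Field k]

/-- Lemma 4.21 of the paper. Suppose there is a map
`ψ : X → G` such that for every `x ∈ X` and every one-parameter subgroup `λ`
of `G`, the limit `λ⁺(ψ(x))` exists if and only if `λ⁺x` exists. Then the map
`η : X → S(G)`, `x ↦ H_x`, is proper. -/
theorem etaProper_of_compatible_map
    {k : Type} [Field k] [IsAlgClosed k] [CharZero k]
    (G : AlgGroup k) (hG : IsReductive G)
    {m : ℕ} (X : GVariety G m)
    (psi : (Fin m → k) → GL (Fin G.n) k)
    (hmem : ∀ x ∈ X.carrier, psi x ∈ G.toSubgroup)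
    (hpsi : ∀ x ∈ X.carrier, ∀ lam : OnePS G,
      (∃ h, GLimit lam (psi x) h) ↔ InLambda X x lam) :
    EtaProper X := by
  intro x hx lam hsub
  have hpsix : psi x ∈ Hx X x :=
    ⟨hmem x hx, fun lam' hl => ⟨hmem x hx, (hpsi x hx lam').2 hl⟩⟩
  exact (hpsi x hx lam).1 (hsub hpsix).2

end PaperGIT
end

section
/- Let G be an affine reductive algebraic group over an algebraically closed field k of characteristic zero and X a closed G-invariant subvariety of G^N, where G acts on G^N diagonally by simultaneous conjugation. Then: (i) for x ∈ X and a one-parameter subgroup μ of G, μ ∈ Λ_x if and only if φ_x ⊆ P(μ); (ii) for every x ∈ X, φ_x ⊆ H_x; (iii) the map η: X → S(G), x ↦ H_x, is proper. -/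
open scoped MatrixGroups

namespace PaperGIT

variable {k : Type} [Field k]

section AuxProofs

variable {k : Type} [Field k]

/-- A polynomial vanishing at all units of an infinite field vanishes everywhere. -/
lemma aux_eval_zero_of_units [Infinite k] {F : Polynomial k}
    (h : ∀ t : kˣ, F.eval (t : k) = 0) (s : k) : F.eval s = 0 := by
  have hF : F = 0 := by
    apply Polynomial.eq_zero_of_infinite_isRoot
    have h1 : ({(0 : k)}ᶜ : Set k).Infinite :=
      Set.Finite.infinite_compl (Set.finite_singleton 0)
    refine h1.mono ?_
    intro x hx
    have hx0 : x ≠ 0 := by simpa using hx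
    simpa using h (Units.mk0 x hx0)
  simp [hF]

/-- Evaluation of a composed multivariable polynomial. -/
lemma aux_eval_comp {σ : Type} (f : MvPolynomial σ k) (q : σ → Polynomial k) (t : k) :
    Polynomial.eval t (MvPolynomial.eval₂ Polynomial.C q f) =
      MvPolynomial.eval (fun s => (q s).eval t) f := by
  have h := MvPolynomial.eval₂_comp_left (Polynomial.evalRingHom t)
    (Polynomial.C.comp (RingHom.id k)) q f
  simp only [RingHom.comp_id] at h
  have h2 : (Polynomial.evalRingHom t).comp Polynomial.C = RingHom.id k := by
    ext x; simp
  rw [show Polynomial.eval t (MvPolynomial.eval₂ Polynomial.C q f)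
      = (Polynomial.evalRingHom t) (MvPolynomial.eval₂ Polynomial.C q f) from rfl, h, h2,
    MvPolynomial.eval₂_id]
  rfl

lemma aux_GLimit_one {G : AlgGroup k} (lam : OnePS G) : GLimit lam 1 1 := by
  refine ⟨one_mem _,
    fun ij => Polynomial.C (((1 : GL (Fin G.n) k) : Matrix (Fin G.n) (Fin G.n) k) ij.1 ij.2),
    ?_, ?_⟩
  · intro t ij; simp
  · intro ij; simp

lemma aux_GLimit_mul {G : AlgGroup k} {lam : OnePS G} {g g' h h' : GL (Fin G.n) k}
    (H : GLimit lam g h) (H' : GLimit lam g' h') : GLimit lam (g * g') (h * h') := by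
  obtain ⟨hmem, q, hq, hq0⟩ := H
  obtain ⟨hmem', q', hq', hq0'⟩ := H'
  refine ⟨mul_mem hmem hmem', fun ij => ∑ l : Fin G.n, q (ij.1, l) * q' (l, ij.2), ?_, ?_⟩
  · intro t ij
    have key : lam.toFun t * (g * g') * (lam.toFun t)⁻¹
        = (lam.toFun t * g * (lam.toFun t)⁻¹) * (lam.toFun t * g' * (lam.toFun t)⁻¹) := by
      group
    rw [key, Units.val_mul, Matrix.mul_apply]
    rw [Polynomial.eval_finset_sum]
    exact Finset.sum_congr rfl fun l _ => by
      rw [Polynomial.eval_mul, hq t (ij.1, l), hq' t (l, ij.2)]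
  · intro ij
    rw [Units.val_mul, Matrix.mul_apply, Polynomial.eval_finset_sum]
    exact Finset.sum_congr rfl fun l _ => by
      rw [Polynomial.eval_mul, hq0 (ij.1, l), hq0' (l, ij.2)]

lemma aux_GLimit_inv [Infinite k] {G : AlgGroup k} {lam : OnePS G} {g h : GL (Fin G.n) k}
    (H : GLimit lam g h) : GLimit lam g⁻¹ h⁻¹ := by
  obtain ⟨hmem, q, hq, hq0⟩ := H
  set P : Matrix (Fin G.n) (Fin G.n) (Polynomial k) := Matrix.of (fun i j => q (i, j)) with hP
  have hmapt : ∀ t : kˣ, (Polynomial.evalRingHom (t : k)).mapMatrix P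
      = ((lam.toFun t * g * (lam.toFun t)⁻¹ : GL (Fin G.n) k) :
          Matrix (Fin G.n) (Fin G.n) k) := by
    intro t
    ext i j
    simp only [RingHom.mapMatrix_apply, Matrix.map_apply, hP, Matrix.of_apply,
      Polynomial.coe_evalRingHom]
    exact (hq t (i, j)).symm
  have hmap0 : (Polynomial.evalRingHom (0 : k)).mapMatrix P
      = (h : Matrix (Fin G.n) (Fin G.n) k) := by
    ext i j
    simp only [RingHom.mapMatrix_apply, Matrix.map_apply, hP, Matrix.of_apply,
      Polynomial.coe_evalRingHom]
    exact (hq0 (i, j)).symm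
  set d : k := ((g : Matrix (Fin G.n) (Fin G.n) k)).det with hd
  have hdet_t : ∀ t : kˣ,
      ((lam.toFun t * g * (lam.toFun t)⁻¹ : GL (Fin G.n) k) :
        Matrix (Fin G.n) (Fin G.n) k).det = d := by
    intro t
    rw [Units.val_mul, Units.val_mul]
    exact Matrix.det_units_conj _ _
  have hDt : ∀ t : kˣ, (P.det).eval (t : k) = d := by
    intro t
    have h1 := RingHom.map_det (Polynomial.evalRingHom (t : k)) P
    rw [hmapt t, hdet_t t] at h1
    simpa using h1
  have hD0 : (P.det).eval 0 = d := by
    have hvan : ∀ t : kˣ, (P.det - Polynomial.C d).eval (t : k) = 0 := by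
      intro t; simp [hDt t]
    have h2 := aux_eval_zero_of_units hvan 0
    rw [Polynomial.eval_sub, Polynomial.eval_C, sub_eq_zero] at h2
    exact h2
  have hdeth : (h : Matrix (Fin G.n) (Fin G.n) k).det = d := by
    have h1 := RingHom.map_det (Polynomial.evalRingHom (0 : k)) P
    rw [hmap0] at h1
    have : Polynomial.eval 0 P.det = (h : Matrix (Fin G.n) (Fin G.n) k).det := by
      simpa using h1
    rw [← this, hD0]
  refine ⟨inv_mem hmem,
    fun ij => Polynomial.C (Ring.inverse d) * (P.adjugate) ij.1 ij.2, ?_, ?_⟩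
  · intro t ij
    have key : lam.toFun t * g⁻¹ * (lam.toFun t)⁻¹
        = (lam.toFun t * g * (lam.toFun t)⁻¹)⁻¹ := by group
    rw [key, Matrix.coe_units_inv, Matrix.inv_def, hdet_t t, ← hmapt t,
      ← RingHom.map_adjugate]
    simp [Matrix.smul_apply, Polynomial.eval_mul]
  · intro ij
    rw [Matrix.coe_units_inv, Matrix.inv_def, hdeth, ← hmap0, ← RingHom.map_adjugate]
    simp [Matrix.smul_apply, Polynomial.eval_mul]

/-- If every component of `x` has a `lam`-limit, then `lam ∈ Λ_x`. -/
lemma aux_gnInLambda [Infinite k] {G : AlgGroup k} {N : ℕ}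
    {X : Set (Fin N → GL (Fin G.n) k)}
    (hXcl : GNClosed G N X)
    (hXinv : ∀ g ∈ G.toSubgroup, ∀ x ∈ X, (fun i => g * x i * g⁻¹) ∈ X)
    {x : Fin N → GL (Fin G.n) k} (hx : x ∈ X) (lam : OnePS G)
    (hlim : ∀ i, ∃ h, GLimit lam (x i) h) : GNInLambda X x lam := by
  choose y hy using hlim
  unfold GLimit at hy
  choose hymem q hq hq0 using hy
  obtain ⟨I, hI⟩ := hXcl
  have hyX : y ∈ X := by
    rw [hI]
    refine ⟨hymem, ?_⟩
    intro f hf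
    set F : Polynomial k := MvPolynomial.eval₂ Polynomial.C (fun p => q p.1 p.2) f with hF
    have hFt : ∀ t : kˣ, F.eval (t : k) = 0 := by
      intro t
      rw [hF, aux_eval_comp]
      have hconj : (fun i => lam.toFun t * x i * (lam.toFun t)⁻¹) ∈ X :=
        hXinv (lam.toFun t) (lam.mem t) x hx
      rw [hI] at hconj
      have h3 := hconj.2 f hf
      have hfun : (fun s : Fin N × Fin G.n × Fin G.n => Polynomial.eval (t : k) (q s.1 s.2))
          = fun p : Fin N × Fin G.n × Fin G.n =>
            ((lam.toFun t * x p.1 * (lam.toFun t)⁻¹ : GL (Fin G.n) k) :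
              Matrix (Fin G.n) (Fin G.n) k) p.2.1 p.2.2 := by
        funext p
        exact (hq p.1 t p.2).symm
      rw [hfun]
      simpa using h3
    have hF0 : F.eval 0 = 0 := aux_eval_zero_of_units hFt 0
    rw [hF, aux_eval_comp] at hF0
    have hfun0 : (fun p : Fin N × Fin G.n × Fin G.n =>
          ((y p.1 : Matrix (Fin G.n) (Fin G.n) k)) p.2.1 p.2.2)
        = fun s : Fin N × Fin G.n × Fin G.n => Polynomial.eval (0 : k) (q s.1 s.2) := by
      funext p
      exact hq0 p.1 p.2
    rw [hfun0]
    exact hF0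
  exact ⟨y, hyX, q, fun t i ij => hq i t ij, fun i ij => hq0 i ij⟩

end AuxProofs

/-- Proposition 5.1 of the paper. Let `X` be a closed
`G`-invariant subvariety of `G^N`, with `G` acting diagonally by simultaneous
conjugation. Then (i) for `x ∈ X` and a 1PS `μ` of `G`, `μ ∈ Λ_x` iff
`φ_x ⊆ P(μ)`; (ii) `φ_x ⊆ H_x` for every `x ∈ X`; (iii) `η` is proper. -/
theorem GN_lambda_phi_and_etaProper
    {k : Type} [Field k] [IsAlgClosed k] [CharZero k]
    (G : AlgGroup k) (hG : IsReductive G)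
    {N : ℕ} (X : Set (Fin N → GL (Fin G.n) k))
    (hXcl : GNClosed G N X)
    (hXinv : ∀ g ∈ G.toSubgroup, ∀ x ∈ X, (fun i => g * x i * g⁻¹) ∈ X) :
    (∀ x ∈ X, ∀ mu : OnePS G, (GNInLambda X x mu ↔ phiSet x ⊆ Pset mu)) ∧
    (∀ x ∈ X, phiSet x ⊆ GNHx X x) ∧
    (∀ x ∈ X, ∀ lam : OnePS G, GNHx X x ⊆ Pset lam → GNInLambda X x lam) := by
  classical
  obtain ⟨I, hI⟩ := hXcl
  -- component membership in G
  have hcomp : ∀ x ∈ X, ∀ i, x i ∈ G.toSubgroup := by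
    intro x hx i
    rw [hI] at hx
    exact hx.1 i
  -- key equivalence (i)
  have key : ∀ x ∈ X, ∀ mu : OnePS G, GNInLambda X x mu ↔ phiSet x ⊆ Pset mu := by
    intro x hx mu
    constructor
    · rintro ⟨y, hyX, q, hq, hq0⟩
      have hxP : ∀ i, x i ∈ Pset mu := by
        intro i
        exact ⟨hcomp x hx i, y i, hcomp y hyX i, q i,
          fun t ij => hq t i ij, fun ij => hq0 i ij⟩
      intro g hg
      have hg' : g ∈ Subgroup.closure (Set.range x) := hg
      refine Subgroup.closure_induction ?_ ?_ ?_ ?_ hg'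
      · rintro a ⟨i, rfl⟩
        exact hxP i
      · exact ⟨one_mem _, 1, aux_GLimit_one mu⟩
      · rintro a b _ _ ⟨haG, ha, hla⟩ ⟨hbG, hb, hlb⟩
        exact ⟨mul_mem haG hbG, ha * hb, aux_GLimit_mul hla hlb⟩
      · rintro a _ ⟨haG, ha, hla⟩
        exact ⟨inv_mem haG, ha⁻¹, aux_GLimit_inv hla⟩
    · intro hsub
      refine aux_gnInLambda ⟨I, hI⟩ hXinv hx mu ?_
      intro i
      have hxi : x i ∈ phiSet x := Subgroup.subset_closure (Set.mem_range_self i)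
      exact (hsub hxi).2
  have part2 : ∀ x ∈ X, phiSet x ⊆ GNHx X x := by
    intro x hx g hg
    have hgG : g ∈ G.toSubgroup := by
      have : Subgroup.closure (Set.range x) ≤ G.toSubgroup :=
        Subgroup.closure_le G.toSubgroup |>.2 (by
          rintro a ⟨i, rfl⟩; exact hcomp x hx i)
      exact this hg
    exact ⟨hgG, fun lam hlam => ((key x hx lam).1 hlam) hg⟩
  refine ⟨key, part2, ?_⟩
  intro x hx lam hsub
  refine aux_gnInLambda ⟨I, hI⟩ hXinv hx lam ?_
  intro i
  have hxi : x i ∈ GNHx X x := part2 x hx (Subgroup.subset_closure (Set.mem_range_self i))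
  exact (hsub hxi).2


end PaperGIT
end

section
/- Let G be an affine reductive algebraic group over an algebraically closed field k of characteristic zero and X a closed G-invariant subvariety of G^N, with G acting diagonally by simultaneous conjugation. For every x ∈ X, the subgroup H_x is completely reducible in G if and only if the subgroup φ_x is completely reducible in G. -/
open scoped MatrixGroups

namespace PaperGIT

variable {k : Type} [Field k]

/-! Write `H(K)` for the intersection of `G` with all R-parabolic subgroups containing
`K`. Since `X` is closed and `G`-invariant, `λ ∈ Λ_x` exactly when `φ_x ⊆ P(λ)`, so
`H_x = H(φ_x)`. For any `K ⊆ G`, `H(K)` and `K` lie in the same R-parabolic subgroups, and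
if `K ⊆ L(μ)` then `K ⊆ P(μ) ∩ P(μ⁻¹)`, hence `H(K) ⊆ P(μ) ∩ P(μ⁻¹) = L(μ)`; so `H(K)` is
completely reducible iff `K` is. Limits are handled by viewing the curve `t ↦ λ(t) g λ(t)⁻¹`
as one invertible matrix over `k[X]` (its determinant is the constant `det g`). -/

section ParabolicHull

open Polynomial Matrix

theorem _root_.Polynomial.eq_of_eval_units_eq [Infinite k] {p q : k[X]}
    (h : ∀ t : kˣ, p.eval (t : k) = q.eval (t : k)) : p = q := by
  refine eq_of_infinite_eval_eq p q ((Set.finite_singleton 0).infinite_compl.mono ?_)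
  intro x hx
  exact h (Units.mk0 x hx)

theorem _root_.Polynomial.eq_C_of_eval_eq_eval_inv [Infinite k] {q r : k[X]}
    (h : ∀ t : kˣ, q.eval (t : k) = r.eval ((t⁻¹ : kˣ) : k)) : q = C (q.coeff 0) := by
  by_cases hq : q = 0
  · simp [hq]
  have hrev : X ^ r.natDegree * q = r.reverse := by
    refine eq_of_eval_units_eq fun t => ?_
    have := eval₂_reverse_mul_pow (RingHom.id k) ((t⁻¹ : kˣ) : k) r
    simp only [invOf_units, inv_inv, eval₂_id] at this
    rw [eval_mul, eval_pow, eval_X, h t, ← this, mul_comm, mul_assoc, ← mul_pow,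
      Units.inv_mul, one_pow, mul_one]
  have hdeg := hrev ▸ reverse_natDegree_le r
  rw [natDegree_mul (pow_ne_zero _ X_ne_zero) hq, natDegree_X_pow] at hdeg
  exact eq_C_of_natDegree_eq_zero (by omega)

theorem _root_.MvPolynomial.eval_eval_zero_eq_zero_of_forall_units [Infinite k] {σ : Type}
    (f : MvPolynomial σ k) (q : σ → k[X])
    (h : ∀ t : kˣ, MvPolynomial.eval (fun s => (q s).eval (t : k)) f = 0) :
    MvPolynomial.eval (fun s => (q s).eval 0) f = 0 := by
  have hF : ∀ c : k,
      (MvPolynomial.aeval q f).eval c = MvPolynomial.eval (fun s => (q s).eval c) f := by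
    intro c
    rw [← coe_aeval_eq_eval, ← AlgHom.comp_apply, MvPolynomial.comp_aeval]
    rfl
  have hF0 : MvPolynomial.aeval q f = 0 :=
    eq_of_eval_units_eq fun t => by rw [hF, h, eval_zero]
  rw [← hF, hF0, eval_zero]

noncomputable abbrev evalGL {n : ℕ} (c : k) : GL (Fin n) k[X] →* GL (Fin n) k :=
  GeneralLinearGroup.map (evalRingHom c)

theorem evalGL_apply {n : ℕ} (c : k) (Q : GL (Fin n) k[X]) (i j : Fin n) :
    evalGL c Q i j = (Q i j).eval c :=
  GeneralLinearGroup.map_apply _ i j Q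

theorem eq_of_evalGL_units_eq [Infinite k] {n : ℕ} {P Q : GL (Fin n) k[X]}
    (h : ∀ t : kˣ, evalGL (t : k) P = evalGL (t : k) Q) : P = Q := by
  refine Units.ext (Matrix.ext fun i j => ?_)
  refine eq_of_eval_units_eq fun t => ?_
  simpa only [evalGL_apply] using congr_arg (fun A : GL (Fin n) k => A i j) (h t)

theorem evalGL_zero_eq_evalGL_one [Infinite k] {n : ℕ} {Q R : GL (Fin n) k[X]}
    (h : ∀ t : kˣ, evalGL (t : k) Q = evalGL ((t⁻¹ : kˣ) : k) R) :
    evalGL 0 Q = evalGL 1 Q := by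
  ext i j
  have hQ : Q i j = C ((Q i j).coeff 0) := eq_C_of_eval_eq_eval_inv fun t => by
    simpa only [evalGL_apply] using congr_arg (fun A : GL (Fin n) k => A i j) (h t)
  rw [evalGL_apply, evalGL_apply, hQ, eval_C, eval_C]

theorem evalGL_map_C {n : ℕ} (c : k) (A : GL (Fin n) k) :
    evalGL c (GeneralLinearGroup.map C A) = A := by
  ext i j
  simp [GeneralLinearGroup.map_apply]

theorem evalGL_map_compRingHom {n : ℕ} (c : k) (p : k[X]) (Q : GL (Fin n) k[X]) :
    evalGL c (GeneralLinearGroup.map (compRingHom p) Q) = evalGL (p.eval c) Q := by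
  ext i j
  simp [GeneralLinearGroup.map_apply, eval_comp]

variable {G : AlgGroup k}

theorem gLimit_iff [Infinite k] {lam : OnePS G} {g h : GL (Fin G.n) k} :
    GLimit lam g h ↔ h ∈ G.toSubgroup ∧ ∃ Q : GL (Fin G.n) k[X],
      (∀ t : kˣ, evalGL (t : k) Q = lam.toFun t * g * (lam.toFun t)⁻¹) ∧ evalGL 0 Q = h := by
  refine and_congr_right fun _ => ⟨fun ⟨q, hq, hq0⟩ => ?_, fun ⟨Q, hQ, hQ0⟩ => ?_⟩
  · set M : Matrix (Fin G.n) (Fin G.n) k[X] := Matrix.of fun i j => q (i, j)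
    have hM : ∀ t : kˣ,
        (evalRingHom (t : k)).mapMatrix M = ↑(lam.toFun t * g * (lam.toFun t)⁻¹) := by
      intro t
      ext i j
      exact (hq t (i, j)).symm
    have hdet : M.det = C (g : Matrix (Fin G.n) (Fin G.n) k).det :=
      eq_of_eval_units_eq fun t => by
        rw [eval_C, ← coe_evalRingHom, RingHom.map_det, hM, Units.val_mul, Units.val_mul,
          det_mul, det_mul, mul_right_comm, ← det_mul, Units.mul_inv, det_one, one_mul]
    have hunit : IsUnit M.det := hdet ▸ isUnit_C.mpr ((isUnit_iff_isUnit_det _).mp g.isUnit)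
    refine ⟨nonsingInvUnit M hunit, fun t => ?_, ?_⟩ <;> ext i j
    · exact (hq t (i, j)).symm
    · exact (hq0 (i, j)).symm
  · exact ⟨fun ij => Q ij.1 ij.2, fun t ij => by rw [← evalGL_apply, hQ t],
      fun ij => by rw [← evalGL_apply, hQ0]⟩

theorem mem_Pset_iff [Infinite k] {lam : OnePS G} {g : GL (Fin G.n) k} :
    g ∈ Pset lam ↔ g ∈ G.toSubgroup ∧ ∃ Q : GL (Fin G.n) k[X],
      (∀ t : kˣ, evalGL (t : k) Q = lam.toFun t * g * (lam.toFun t)⁻¹) ∧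
        evalGL 0 Q ∈ G.toSubgroup := by
  simp only [Pset, Set.mem_ofPred_eq, gLimit_iff]
  refine and_congr_right fun _ => ⟨?_, ?_⟩
  · rintro ⟨-, hh, Q, hQ, rfl⟩
    exact ⟨Q, hQ, hh⟩
  · rintro ⟨Q, hQ, hh⟩
    exact ⟨_, hh, Q, hQ, rfl⟩

def parabolicSubgroup [Infinite k] (lam : OnePS G) : Subgroup (GL (Fin G.n) k) where
  carrier := Pset lam
  one_mem' := mem_Pset_iff.mpr ⟨G.toSubgroup.one_mem, 1, fun t => by simp, by simp⟩
  mul_mem' := by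
    rintro a b ha hb
    obtain ⟨ha, P, hP, hP0⟩ := mem_Pset_iff.mp ha
    obtain ⟨hb, Q, hQ, hQ0⟩ := mem_Pset_iff.mp hb
    refine mem_Pset_iff.mpr ⟨G.toSubgroup.mul_mem ha hb, P * Q, fun t => ?_, ?_⟩
    · rw [map_mul, hP, hQ]
      group
    · rw [map_mul]
      exact G.toSubgroup.mul_mem hP0 hQ0
  inv_mem' := by
    rintro a ha
    obtain ⟨ha, P, hP, hP0⟩ := mem_Pset_iff.mp ha
    refine mem_Pset_iff.mpr ⟨G.toSubgroup.inv_mem ha, P⁻¹, fun t => ?_, ?_⟩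
    · rw [map_inv, hP]
      group
    · rw [map_inv]
      exact G.toSubgroup.inv_mem hP0

theorem coe_parabolicSubgroup [Infinite k] (lam : OnePS G) :
    (parabolicSubgroup lam : Set (GL (Fin G.n) k)) = Pset lam :=
  rfl

def OnePS.inv (mu : OnePS G) : OnePS G where
  toFun := mu.toFun.comp (invMonoidHom : kˣ →* kˣ)
  mem t := mu.mem _
  regular := by
    obtain ⟨p, hp⟩ := mu.regular
    refine ⟨fun ij => MvPolynomial.rename Bool.not (p ij), fun t ij => ?_⟩
    rw [MvPolynomial.eval_rename]
    refine (hp t⁻¹ ij).trans (congr_arg (fun v => MvPolynomial.eval v (p ij)) (funext fun b => ?_))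
    cases b <;> simp

@[simp]
theorem OnePS.inv_toFun (mu : OnePS G) (t : kˣ) : mu.inv.toFun t = mu.toFun t⁻¹ :=
  rfl

theorem Lset_subset_Pset (mu : OnePS G) : Lset mu ⊆ Pset mu :=
  fun g hg => ⟨hg.1, g, hg.2⟩

theorem commute_of_mem_Lset [Infinite k] {mu : OnePS G} {g : GL (Fin G.n) k}
    (hg : g ∈ Lset mu) (s : kˣ) : Commute (mu.toFun s) g := by
  obtain ⟨-, Q, hQ, hQ0⟩ := gLimit_iff.mp hg.2
  -- Reparametrising the curve by `t ↦ s t` conjugates it by `μ(s)`; now compare at `t = 0`.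
  have hshift : GeneralLinearGroup.map (compRingHom (C (s : k) * X)) Q =
      GeneralLinearGroup.map C (mu.toFun s) * Q * GeneralLinearGroup.map C (mu.toFun s)⁻¹ :=
    eq_of_evalGL_units_eq fun t => by
      have hst := hQ (s * t)
      rw [map_mul] at hst
      rw [evalGL_map_compRingHom, map_mul, map_mul, evalGL_map_C, evalGL_map_C, hQ]
      simp only [eval_mul, eval_C, eval_X, ← Units.val_mul, hst]
      group
  have h0 := congr_arg (evalGL 0) hshift
  rw [evalGL_map_compRingHom, map_mul, map_mul, evalGL_map_C, evalGL_map_C, eval_mul, eval_X,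
    mul_zero, hQ0] at h0
  exact mul_inv_eq_iff_eq_mul.mp h0.symm

theorem mem_Lset_of_commute [Infinite k] {mu : OnePS G} {g : GL (Fin G.n) k}
    (hg : g ∈ G.toSubgroup) (h : ∀ t : kˣ, Commute (mu.toFun t) g) : g ∈ Lset mu :=
  ⟨hg, gLimit_iff.mpr ⟨hg, GeneralLinearGroup.map C g,
    fun t => by rw [evalGL_map_C, (h t).mul_inv_cancel], evalGL_map_C 0 g⟩⟩

theorem Lset_subset_Lset_inv [Infinite k] (mu : OnePS G) : Lset mu ⊆ Lset mu.inv :=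
  fun _ hg => mem_Lset_of_commute hg.1 fun t => commute_of_mem_Lset hg t⁻¹

theorem Pset_inter_Pset_inv_subset_Lset [Infinite k] (mu : OnePS G) :
    Pset mu ∩ Pset mu.inv ⊆ Lset mu := by
  rintro _ ⟨hgP, hgP'⟩
  obtain ⟨hg, Q, hQ, -⟩ := mem_Pset_iff.mp hgP
  obtain ⟨-, R, hR, -⟩ := mem_Pset_iff.mp hgP'
  have h01 : evalGL 0 Q = evalGL 1 Q :=
    evalGL_zero_eq_evalGL_one fun t => by rw [hQ, hR, OnePS.inv_toFun, inv_inv]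
  refine ⟨hg, gLimit_iff.mpr ⟨hg, Q, hQ, ?_⟩⟩
  simpa using h01.trans (hQ 1)

def parabolicHull (G : AlgGroup k) (K : Set (GL (Fin G.n) k)) : Set (GL (Fin G.n) k) :=
  {g | g ∈ G.toSubgroup ∧ ∀ lam : OnePS G, K ⊆ Pset lam → g ∈ Pset lam}

theorem subset_parabolicHull {K : Set (GL (Fin G.n) k)} (hK : K ⊆ G.toSubgroup) :
    K ⊆ parabolicHull G K :=
  fun _ hg => ⟨hK hg, fun _ hKP => hKP hg⟩

theorem completelyReducible_parabolicHull_iff [Infinite k] {K : Set (GL (Fin G.n) k)}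
    (hK : K ⊆ G.toSubgroup) :
    CompletelyReducible G (parabolicHull G K) ↔ CompletelyReducible G K := by
  constructor
  · intro hH lam hKP
    obtain ⟨L, hL, hHL⟩ := hH lam fun g hg => hg.2 lam hKP
    exact ⟨L, hL, (subset_parabolicHull hK).trans hHL⟩
  · intro hKcr lam hHP
    obtain ⟨L, ⟨mu, hPmu, rfl⟩, hKL⟩ := hKcr lam ((subset_parabolicHull hK).trans hHP)
    refine ⟨Lset mu, ⟨mu, hPmu, rfl⟩, fun g hg => Pset_inter_Pset_inv_subset_Lset mu
      ⟨hg.2 mu (hKL.trans (Lset_subset_Pset mu)), hg.2 mu.inv ?_⟩⟩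
    exact hKL.trans ((Lset_subset_Lset_inv mu).trans (Lset_subset_Pset mu.inv))

variable {N : ℕ} {X : Set (Fin N → GL (Fin G.n) k)} {x : Fin N → GL (Fin G.n) k}

theorem GNClosed.mem_toSubgroup (hXcl : GNClosed G N X) (hx : x ∈ X) (i : Fin N) :
    x i ∈ G.toSubgroup := by
  obtain ⟨I, rfl⟩ := hXcl
  exact hx.1 i

theorem phiSet_subset_toSubgroup (hXcl : GNClosed G N X) (hx : x ∈ X) :
    phiSet x ⊆ G.toSubgroup :=
  Subgroup.closure_le _ |>.mpr <| Set.range_subset_iff.mpr (hXcl.mem_toSubgroup hx)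

theorem phiSet_subset_Pset_iff [Infinite k] {lam : OnePS G} :
    phiSet x ⊆ Pset lam ↔ ∀ i, x i ∈ Pset lam := by
  rw [phiSet, ← coe_parabolicSubgroup, SetLike.coe_subset_coe, Subgroup.closure_le,
    Set.range_subset_iff]

theorem gnInLambda_iff [Infinite k] (hXcl : GNClosed G N X)
    (hXinv : ∀ g ∈ G.toSubgroup, ∀ x ∈ X, (fun i => g * x i * g⁻¹) ∈ X) (hx : x ∈ X)
    {lam : OnePS G} : GNInLambda X x lam ↔ ∀ i, x i ∈ Pset lam := by
  constructor
  · rintro ⟨y, hyX, q, hq, hq0⟩ i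
    exact ⟨hXcl.mem_toSubgroup hx i, y i, hXcl.mem_toSubgroup hyX i, q i,
      fun t => hq t i, hq0 i⟩
  · intro h
    choose y hy q hq hq0 using fun i => (h i).2
    refine ⟨y, ?_, q, fun t i => hq i t, hq0⟩
    obtain ⟨I, rfl⟩ := hXcl
    refine ⟨hy, fun f hf => ?_⟩
    have hcurve := MvPolynomial.eval_eval_zero_eq_zero_of_forall_units f
      (fun p => q p.1 p.2) fun t => by
        simpa only [hq] using (hXinv _ (lam.mem t) x hx).2 f hf
    simpa only [hq0] using hcurve

theorem GNHx_eq_parabolicHull [Infinite k] (hXcl : GNClosed G N X)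
    (hXinv : ∀ g ∈ G.toSubgroup, ∀ x ∈ X, (fun i => g * x i * g⁻¹) ∈ X) (hx : x ∈ X) :
    GNHx X x = parabolicHull G (phiSet x) := by
  ext g
  simp only [GNHx, parabolicHull, Set.mem_ofPred_eq, gnInLambda_iff hXcl hXinv hx,
    phiSet_subset_Pset_iff]

end ParabolicHull

theorem GNHx_cr_iff_phi_cr_general
    {k : Type} [Field k] [IsAlgClosed k]
    (G : AlgGroup k)
    {N : ℕ} (X : Set (Fin N → GL (Fin G.n) k))
    (hXcl : GNClosed G N X)
    (hXinv : ∀ g ∈ G.toSubgroup, ∀ x ∈ X, (fun i => g * x i * g⁻¹) ∈ X)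
    (x : Fin N → GL (Fin G.n) k) (hx : x ∈ X) :
    CompletelyReducible G (GNHx X x) ↔ CompletelyReducible G (phiSet x) := by
  rw [GNHx_eq_parabolicHull hXcl hXinv hx]
  exact completelyReducible_parabolicHull_iff (phiSet_subset_toSubgroup hXcl hx)

/-- Theorem 1.4 / Proposition 5.2 of the paper. Let `X` be
a closed `G`-invariant subvariety of `G^N` with the simultaneous conjugation
action. For every `x ∈ X`, `H_x` is completely reducible in `G` if and only if
`φ_x` is completely reducible in `G`. -/
theorem GNHx_cr_iff_phi_cr
    {k : Type} [Field k] [IsAlgClosed k] [CharZero k]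
    (G : AlgGroup k) (hG : IsReductive G)
    {N : ℕ} (X : Set (Fin N → GL (Fin G.n) k))
    (hXcl : GNClosed G N X)
    (hXinv : ∀ g ∈ G.toSubgroup, ∀ x ∈ X, (fun i => g * x i * g⁻¹) ∈ X)
    (x : Fin N → GL (Fin G.n) k) (hx : x ∈ X) :
    CompletelyReducible G (GNHx X x) ↔ CompletelyReducible G (phiSet x) :=
  GNHx_cr_iff_phi_cr_general G X hXcl hXinv x hx

end PaperGIT
end
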